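/- arXiv:2103.17214 — 3 statements merged into one kernel-verified Lean document; each statement's English description precedes it below -/
import Mathlib

section
/- Let X ⊆ ℂⁿ be compact and rationally convex, let p ∈ X̂ \ X, and suppose Ȟ¹(X; ℤ) = 0 (equivalently, every nonvanishing continuous function on X has a continuous logarithm). If X has the property that every polynomial with a continuous logarithm on X is nonvanishing on X̂, then p ∈ X, a contradiction; hence X is polynomially convex. -/
open Filter Metric MeasureTheory Topology

noncomputable def ev {n : ℕ} (P : MvPolynomial (Fin n) ℂ) (z : EuclideanSpace ℂ (Fin n)) : ℂ :=
  MvPolynomial.eval (fun i => z i) P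

def polyHull {n : ℕ} (K : Set (EuclideanSpace ℂ (Fin n))) : Set (EuclideanSpace ℂ (Fin n)) :=
  {z | ∀ P : MvPolynomial (Fin n) ℂ, ‖ev P z‖ ≤ sSup ((fun w => ‖ev P w‖) '' K)}

/-- `P` admits a continuous logarithm on `K`. -/
def HasContLog {n : ℕ} (P : MvPolynomial (Fin n) ℂ) (K : Set (EuclideanSpace ℂ (Fin n))) : Prop :=
  ∃ g : EuclideanSpace ℂ (Fin n) → ℂ, ContinuousOn g K ∧ ∀ z ∈ K, ev P z = Complex.exp (g z)

/-- `K` satisfies Stolzenberg's generalized argument principle. -/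
def GenArgPrinciple {n : ℕ} (K : Set (EuclideanSpace ℂ (Fin n))) : Prop :=
  ∀ P : MvPolynomial (Fin n) ℂ, HasContLog P K → ∀ z ∈ polyHull K, ev P z ≠ 0

/-- `X` is rationally convex. -/
def RatConvex {n : ℕ} (X : Set (EuclideanSpace ℂ (Fin n))) : Prop :=
  ∀ z ∉ X, ∃ P : MvPolynomial (Fin n) ℂ, ev P z = 0 ∧ ∀ w ∈ X, ev P w ≠ 0

/-! A point `z` of the hull outside `X` is the zero of a polynomial `P` that does not vanish on `X`;
since `Ȟ¹(X; ℤ) = 0`, `P` has a continuous logarithm on `X`, so the generalized argument principle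
forbids `P` from vanishing at `z`. -/

theorem continuous_ev {n : ℕ} (P : MvPolynomial (Fin n) ℂ) : Continuous (ev P) :=
  P.continuous_eval.comp <|
    continuous_pi fun i => (continuous_apply i).comp (PiLp.continuous_ofLp 2 _)

theorem subset_polyHull {n : ℕ} {X : Set (EuclideanSpace ℂ (Fin n))} (hX : IsCompact X) :
    X ⊆ polyHull X := fun z hz P =>
  le_csSup (hX.image (continuous_ev P).norm).bddAbove ⟨z, hz, rfl⟩

theorem polyHull_subset_of_ratConvex_of_genArgPrinciple {n : ℕ} {X : Set (EuclideanSpace ℂ (Fin n))}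
    (hrat : RatConvex X)
    (hlog : ∀ P : MvPolynomial (Fin n) ℂ, (∀ z ∈ X, ev P z ≠ 0) → HasContLog P X)
    (hgap : GenArgPrinciple X) :
    polyHull X ⊆ X := by
  intro z hz
  by_contra hzX
  obtain ⟨P, hPz, hPX⟩ := hrat z hzX
  exact hgap P (hlog P hPX) z hz hPz

theorem polynomially_convex_of_ratConvex_GAP (n : ℕ)
    (X : Set (EuclideanSpace ℂ (Fin n))) (hX : IsCompact X)
    (hrat : RatConvex X)
    (hH1 : ∀ f : EuclideanSpace ℂ (Fin n) → ℂ, ContinuousOn f X → (∀ z ∈ X, f z ≠ 0) →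
      ∃ g : EuclideanSpace ℂ (Fin n) → ℂ, ContinuousOn g X ∧ ∀ z ∈ X, f z = Complex.exp (g z))
    (hgap : GenArgPrinciple X) :
    polyHull X = X := by
  have hlog : ∀ P : MvPolynomial (Fin n) ℂ, (∀ z ∈ X, ev P z ≠ 0) → HasContLog P X :=
    fun P hPX => hH1 (ev P) (continuous_ev P).continuousOn hPX
  exact (polyHull_subset_of_ratConvex_of_genArgPrinciple hrat hlog hgap).antisymm
    (subset_polyHull hX)
end

section
/- Let Y ⊆ ℂⁿ be compact and rationally convex, and let Γ ⊆ ℂⁿ have zero two-dimensional Hausdorff measure with K = Y ∪ Γ compact. Then K is rationally convex. -/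
/-!
Given `z ∉ Y ∪ Γ`, rational convexity of `Y` gives a polynomial `P` with `P z = 0` and no zero on
`Y`. Every point of the compact set `Y ∪ Γ` has some coordinate at distance `> β` from `z`, and we
correct `P` one coordinate at a time by adding `t • (w k - z k)`, which keeps the zero at `z`. Where
`|w k - z k| ≥ β`, the new polynomial vanishes only if `t = -P w / (w k - z k)`; this quotient is
locally Lipschitz, so it maps `Γ` onto a set of zero area in `ℂ`, and a small `t` outside it keeps
the polynomial bounded away from zero there, while elsewhere a small `t` costs only a fraction of
the previous lower bound.
-/

open Filter Metric MeasureTheory Topology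

instance Complex.isOpenPosMeasure_hausdorffMeasure_two :
    Measure.IsOpenPosMeasure (μH[2] : Measure ℂ) := by
  have : (μH[2] : Measure ℂ).IsAddHaarMeasure := by
    simpa using isAddHaarMeasure_hausdorffMeasure (E := ℂ)
  infer_instance

theorem IsCompact.exists_pos_forall_le_norm {X E : Type*} [TopologicalSpace X]
    [NormedAddCommGroup E] {s : Set X} {f : X → E} (hs : IsCompact s) (hf : ContinuousOn f s)
    (hf0 : ∀ x ∈ s, f x ≠ 0) : ∃ δ > 0, ∀ x ∈ s, δ ≤ ‖f x‖ := by
  rcases s.eq_empty_or_nonempty with rfl | hne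
  · exact ⟨1, one_pos, by simp⟩
  obtain ⟨x₀, hx₀, hmin⟩ := hs.exists_isMinOn hne hf.norm
  exact ⟨‖f x₀‖, norm_pos_iff.mpr (hf0 x₀ hx₀), fun x hx => hmin hx⟩

theorem IsCompact.exists_pos_forall_exists_lt_norm_sub {𝕜 ι : Type*} [RCLike 𝕜] [Fintype ι]
    {K : Set (EuclideanSpace 𝕜 ι)} (hK : IsCompact K) {z : EuclideanSpace 𝕜 ι} (hz : z ∉ K) :
    ∃ β > 0, ∀ w ∈ K, ∃ i, β < ‖w i - z i‖ := by
  obtain ⟨δ, hδ, hδK⟩ := hK.exists_pos_forall_le_norm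
    (f := fun w => WithLp.ofLp (w - z)) (by fun_prop)
    (fun w hw h => hz (sub_eq_zero.mp ((WithLp.ofLp_eq_zero 2).1 h) ▸ hw))
  refine ⟨δ / 2, half_pos hδ, fun w hw => ?_⟩
  by_contra! hnear
  have : ‖WithLp.ofLp (w - z)‖ ≤ δ / 2 :=
    (pi_norm_le_iff_of_nonneg (half_pos hδ).le).mpr (by simpa using hnear)
  linarith [hδK w hw]

theorem IsClosed.exists_mem_ball_forall_le_dist {X : Type*} [MetricSpace X] [MeasurableSpace X]
    {μ : Measure X} [Measure.IsOpenPosMeasure μ] {T : Set X} (hT : IsClosed T) {x : X} {r : ℝ}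
    (hr : 0 < r) (hnull : μ (T ∩ ball x r) = 0) :
    ∃ t ∈ ball x r, ∃ γ > 0, ∀ v ∈ T, γ ≤ dist t v := by
  obtain ⟨t, htr, htT⟩ : (ball x r \ T).Nonempty := by
    refine nonempty_of_measure_ne_zero (μ := μ) ?_
    rw [← Set.sdiff_inter_self_eq_sdiff, measure_sdiff_null hnull]
    exact (measure_ball_pos μ x hr).ne'
  obtain ⟨γ, hγ, hball⟩ := Metric.isOpen_iff.mp hT.isOpen_compl t htT
  exact ⟨t, htr, γ, hγ, fun v hv => not_lt.mp fun h => hball (mem_ball'.mpr h) hv⟩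

section ContDiffLipschitz

variable {𝕜 E F : Type*} [RCLike 𝕜] [NormedAddCommGroup E] [NormedSpace 𝕜 E]
  [NormedAddCommGroup F] [NormedSpace 𝕜 F] {f : E → F} {s : Set E}

theorem IsCompact.exists_lipschitzOnWith_of_contDiffAt (hs : IsCompact s)
    (hf : ∀ x ∈ s, ContDiffAt 𝕜 1 f x) : ∃ L, LipschitzOnWith L f s :=
  LocallyLipschitzOn.exists_lipschitzOnWith_of_compact hs fun x hx =>
    let ⟨L, t, ht, hL⟩ := (hf x hx).exists_lipschitzOnWith
    ⟨L, t, nhdsWithin_le_nhds ht, hL⟩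

theorem IsCompact.hausdorffMeasure_image_eq_zero_of_contDiffAt [MeasurableSpace E] [BorelSpace E]
    [MeasurableSpace F] [BorelSpace F] (hs : IsCompact s) (hf : ∀ x ∈ s, ContDiffAt 𝕜 1 f x)
    {t : Set E} (hts : t ⊆ s) {d : ℝ} (hd : 0 ≤ d) (ht : μH[d] t = 0) :
    μH[d] (f '' t) = 0 := by
  obtain ⟨L, hL⟩ := hs.exists_lipschitzOnWith_of_contDiffAt hf
  simpa [ht] using (hL.mono hts).hausdorffMeasure_image_le hd

end ContDiffLipschitz

section Perturbation

variable {E : Type*} [NormedAddCommGroup E] [NormedSpace ℂ E] [MeasurableSpace E] [BorelSpace E]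
  {K Γ : Set E} {g u : E → ℂ}

theorem IsCompact.exists_mem_ball_forall_le_norm_add_div (hK : IsCompact K) (hΓ : μH[2] Γ = 0)
    (hg : ContDiff ℂ 1 g) (hu : ContDiff ℂ 1 u) (hu0 : ∀ w ∈ K, u w ≠ 0) {r : ℝ} (hr : 0 < r)
    (hgK : ∀ w ∈ K, w ∉ Γ → r * ‖u w‖ ≤ ‖g w‖) :
    ∃ t ∈ ball (0 : ℂ) r, ∃ γ > 0, ∀ w ∈ K, γ ≤ ‖t + g w / u w‖ := by
  set h : E → ℂ := fun w => -(g w / u w)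
  have hh : ∀ w ∈ K, ContDiffAt ℂ 1 h w := fun w hw =>
    (hg.contDiffAt.div hu.contDiffAt (hu0 w hw)).neg
  -- points off `Γ` are sent outside the ball, so only the null set `h '' (K ∩ Γ)` meets it
  have hT : h '' K ∩ ball 0 r ⊆ h '' (K ∩ Γ) := by
    rintro _ ⟨⟨w, hwK, rfl⟩, hwr⟩
    refine ⟨w, ⟨hwK, by_contra fun hwΓ => ?_⟩, rfl⟩
    rw [mem_ball_zero_iff, norm_neg, norm_div, div_lt_iff₀ (norm_pos_iff.mpr (hu0 w hwK))] at hwr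
    exact (hgK w hwK hwΓ).not_gt hwr
  have hnull : μH[2] (h '' K ∩ ball 0 r) = 0 :=
    measure_mono_null hT (hK.hausdorffMeasure_image_eq_zero_of_contDiffAt hh
      Set.inter_subset_left zero_le_two (measure_mono_null Set.inter_subset_right hΓ))
  obtain ⟨t, htr, γ, hγ, htT⟩ := (hK.image_of_continuousOn
    fun w hw => (hh w hw).continuousAt.continuousWithinAt).isClosed.exists_mem_ball_forall_le_dist
      hr hnull
  refine ⟨t, htr, γ, hγ, fun w hw => ?_⟩
  simpa [h, dist_eq_norm] using htT (h w) ⟨w, hw, rfl⟩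

theorem IsCompact.exists_add_mul_bounded_below (hK : IsCompact K) (hΓ : μH[2] Γ = 0)
    (hg : ContDiff ℂ 1 g) (hu : ContDiff ℂ 1 u) {α β : ℝ} (hα : 0 < α) (hβ : 0 < β)
    (hgK : ∀ w ∈ K, w ∉ Γ → α ≤ ‖g w‖) :
    ∃ t : ℂ, ∃ α' > 0, ∀ w ∈ K, (‖u w‖ ≤ β → α ≤ ‖g w‖) → α' ≤ ‖g w + t * u w‖ := by
  obtain ⟨D, hD, huD⟩ : ∃ D > 0, ∀ w ∈ K, ‖u w‖ ≤ D := by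
    obtain ⟨D, hD⟩ := hK.exists_bound_of_continuousOn hu.continuous.continuousOn
    exact ⟨max D 1, by positivity, fun w hw => (hD w hw).trans (le_max_left _ _)⟩
  have hrD : α / (2 * D) * D = α / 2 := by field_simp
  set W := K ∩ {w | β ≤ ‖u w‖}
  have hu0 : ∀ w ∈ W, u w ≠ 0 := fun w hw h0 => by
    have : β ≤ ‖u w‖ := hw.2
    rw [h0, norm_zero] at this
    linarith
  have hW : IsCompact W := hK.inter_right (isClosed_le continuous_const hu.continuous.norm)
  obtain ⟨t, htr, γ, hγ, htW⟩ := hW.exists_mem_ball_forall_le_norm_add_div hΓ hg hu hu0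
    (r := α / (2 * D)) (by positivity) fun w hw hwΓ => calc
      α / (2 * D) * ‖u w‖ ≤ α / (2 * D) * D := by gcongr; exact huD w hw.1
      _ = α / 2 := hrD
      _ ≤ ‖g w‖ := by linarith [hgK w hw.1 hwΓ]
  refine ⟨t, min (α / 2) (β * γ), by positivity, fun w hwK hsmall => ?_⟩
  by_cases hwβ : β ≤ ‖u w‖
  · have hwW : w ∈ W := ⟨hwK, hwβ⟩
    calc min (α / 2) (β * γ) ≤ β * γ := min_le_right _ _
      _ ≤ ‖u w‖ * ‖t + g w / u w‖ := by gcongr; exact htW w hwW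
      _ = ‖g w + t * u w‖ := by
        rw [← norm_mul, mul_add, mul_div_cancel₀ _ (hu0 w hwW), add_comm, mul_comm]
  · have htu : ‖t * u w‖ ≤ α / 2 := by
      rw [norm_mul, ← hrD]
      exact mul_le_mul (mem_ball_zero_iff.mp htr).le (huD w hwK) (norm_nonneg _) (by positivity)
    calc min (α / 2) (β * γ) ≤ α / 2 := min_le_left _ _
      _ ≤ ‖g w‖ - ‖t * u w‖ := by linarith [hsmall (not_le.mp hwβ).le]
      _ ≤ ‖g w + t * u w‖ := by simpa using norm_sub_norm_le (g w) (-(t * u w))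

end Perturbation

theorem contDiff_ev {n : ℕ} (P : MvPolynomial (Fin n) ℂ) {k : WithTop ℕ∞} :
    ContDiff ℂ k (ev P) := by
  induction P using MvPolynomial.induction_on with
  | C a =>
    rw [show ev (MvPolynomial.C a) = fun _ => a by funext w; simp [ev]]
    exact contDiff_const
  | add p q hp hq =>
    rw [show ev (p + q) = fun w => ev p w + ev q w by funext w; simp [ev]]
    exact hp.add hq
  | mul_X p i hp =>
    rw [show ev (p * MvPolynomial.X i) = fun w => ev p w * w i by funext w; simp [ev]]
    exact hp.mul (by fun_prop)

theorem exists_eval_eq_zero_bounded_below {n : ℕ} [MeasurableSpace (EuclideanSpace ℂ (Fin n))]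
    [BorelSpace (EuclideanSpace ℂ (Fin n))] {K Γ : Set (EuclideanSpace ℂ (Fin n))}
    (hK : IsCompact K) (hΓ : μH[2] Γ = 0) {z : EuclideanSpace ℂ (Fin n)} {β : ℝ} (hβ : 0 < β)
    {P : MvPolynomial (Fin n) ℂ} (hPz : ev P z = 0) {α : ℝ} (hα : 0 < α)
    (hP : ∀ w ∈ K, (w ∉ Γ ∨ ∀ i, ‖w i - z i‖ ≤ β) → α ≤ ‖ev P w‖) (s : Finset (Fin n)) :
    ∃ Q : MvPolynomial (Fin n) ℂ, ev Q z = 0 ∧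
      ∃ α' > 0, ∀ w ∈ K, (w ∉ Γ ∨ ∀ i ∉ s, ‖w i - z i‖ ≤ β) → α' ≤ ‖ev Q w‖ := by
  classical
  induction s using Finset.induction_on with
  | empty => exact ⟨P, hPz, α, hα, by simpa using hP⟩
  | insert k s _ ih =>
    obtain ⟨Q, hQz, α, hα, hQ⟩ := ih
    set U : MvPolynomial (Fin n) ℂ := MvPolynomial.X k - MvPolynomial.C (z k)
    obtain ⟨t, α', hα', ht⟩ := hK.exists_add_mul_bounded_below hΓ (contDiff_ev Q) (contDiff_ev U)
      hα hβ fun w hw hwΓ => hQ w hw (Or.inl hwΓ)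
    have hU : ∀ w, ev U w = w k - z k := fun w => by simp [U, ev]
    have hev : ∀ w, ev (Q + MvPolynomial.C t * U) w = ev Q w + t * ev U w := fun w => by
      simp [ev]
    refine ⟨Q + MvPolynomial.C t * U, by simp [hev, hU, hQz], α', hα', fun w hw hnear => ?_⟩
    rw [hev]
    refine ht w hw fun hk => hQ w hw <| hnear.imp_right fun hfar i hi => ?_
    by_cases hik : i = k
    · simpa [hik, hU] using hk
    · exact hfar i (by simp [hik, hi])

theorem ratConvex_union_of_zero_area (n : ℕ)
    [m : MeasurableSpace (EuclideanSpace ℂ (Fin n))]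
    [BorelSpace (EuclideanSpace ℂ (Fin n))]
    (Y Γ : Set (EuclideanSpace ℂ (Fin n)))
    (hY : IsCompact Y) (hrat : RatConvex Y)
    (hΓ : μH[2] Γ = 0) (hK : IsCompact (Y ∪ Γ)) :
    RatConvex (Y ∪ Γ) := by
  intro z hz
  obtain ⟨P, hPz, hPY⟩ := hrat z fun hzY => hz (Or.inl hzY)
  obtain ⟨δ, hδ, hδP⟩ :=
    hY.exists_pos_forall_le_norm (contDiff_ev P (k := 0)).continuous.continuousOn hPY
  obtain ⟨β, hβ, hfar⟩ := hK.exists_pos_forall_exists_lt_norm_sub hz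
  have hP : ∀ w ∈ Y ∪ Γ, (w ∉ Γ ∨ ∀ i, ‖w i - z i‖ ≤ β) → δ ≤ ‖ev P w‖ := by
    rintro w hw (hwΓ | hnear)
    · exact hδP w (hw.resolve_right hwΓ)
    · obtain ⟨i, hi⟩ := hfar w hw
      exact absurd (hnear i) (not_le.mpr hi)
  obtain ⟨Q, hQz, α, hα, hQ⟩ :=
    exists_eval_eq_zero_bounded_below hK hΓ hβ hPz hδ hP Finset.univ
  refine ⟨Q, hQz, fun w hw hQw => ?_⟩
  have := hQ w hw (Or.inr fun i hi => absurd (Finset.mem_univ i) hi)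
  rw [hQw, norm_zero] at this
  exact hα.not_ge this
end

section
/- Carleman's approximation theorem: for every continuous function g : ℝ → ℂ and every positive continuous function ε : ℝ → (0,∞), there exists an entire function f on ℂ such that |f(x) - g(x)| < ε(x) for all x ∈ ℝ. -/
/-!
By Weierstrass, pick polynomials `pₙ` with `|pₙ - g| ≤ 2⁻ⁿ/8` on `[-(n+1), n+1]`. Each difference
`pₙ₊₁ - pₙ` is small on `[-(n+1), n+1]`; multiplied by the entire cutoff
`1 - exp (-(z/aₙ)^(2mₙ))`, `aₙ = n + 1/2`, with `mₙ` large, it becomes tiny on the disc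
`|z| ≤ aₙ/2` (so the series converges locally uniformly to an entire function) and changes little on
the real axis outside `[-(n+1), n+1]`, since polynomials grow at most exponentially. Hence
`p₀ + ∑ (pₙ₊₁ - pₙ) · cutoffₙ` is entire and within `1` of `g` on `ℝ`.
A variable tolerance `ε` follows by an exponential twist: if `F₁` is entire with
`Re F₁ > -log ε` on `ℝ` and `F₂` is entire within `1` of `g e^{F₁}`, then `f = F₂ e^{-F₁}` is
within `ε` of `g`.
-/

open Polynomial Filter Topology

theorem exists_polynomial_near_of_continuous (G : ℝ → ℂ) (hG : Continuous G) (R θ : ℝ)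
    (hθ : 0 < θ) : ∃ p : ℂ[X], ∀ x : ℝ, |x| ≤ R → ‖p.eval (x : ℂ) - G x‖ < θ := by
  obtain ⟨p₁, hp₁⟩ := exists_polynomial_near_of_continuousOn (-R) R (fun x => (G x).re)
    (Complex.continuous_re.comp hG).continuousOn (θ / 2) (half_pos hθ)
  obtain ⟨p₂, hp₂⟩ := exists_polynomial_near_of_continuousOn (-R) R (fun x => (G x).im)
    (Complex.continuous_im.comp hG).continuousOn (θ / 2) (half_pos hθ)
  refine ⟨p₁.map Complex.ofRealHom + C Complex.I * p₂.map Complex.ofRealHom, fun x hx => ?_⟩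
  have hmap (q : ℝ[X]) : (q.map Complex.ofRealHom).eval (x : ℂ) = q.eval x := by
    rw [eval_map]; exact eval₂_at_apply _ _
  have hre := hp₁ x (abs_le.mp hx)
  have him := hp₂ x (abs_le.mp hx)
  refine (Complex.norm_le_abs_re_add_abs_im _).trans_lt ?_
  simp only [eval_add, eval_mul, eval_C, hmap, Complex.sub_re, Complex.add_re, Complex.sub_im,
    Complex.add_im, Complex.mul_re, Complex.mul_im, Complex.ofReal_re, Complex.ofReal_im,
    Complex.I_re, Complex.I_im]
  ring_nf at hre him ⊢
  linarith

theorem Polynomial.exists_norm_eval_le_mul_exp {R : Type*} [SeminormedRing R] [NormOneClass R]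
    (p : R[X]) : ∃ A, ∀ z : R, ‖p.eval z‖ ≤ A * Real.exp ‖z‖ := by
  refine ⟨∑ i ∈ Finset.range (p.natDegree + 1), ‖p.coeff i‖ * i.factorial, fun z => ?_⟩
  rw [eval_eq_sum_range, Finset.sum_mul]
  refine (norm_sum_le _ _).trans (Finset.sum_le_sum fun i _ => ?_)
  have hpow : ‖z‖ ^ i ≤ i.factorial * Real.exp ‖z‖ := by
    have := Real.pow_div_factorial_le_exp ‖z‖ (norm_nonneg z) i
    rwa [div_le_iff₀ (by positivity), mul_comm] at this
  calc ‖p.coeff i * z ^ i‖ ≤ ‖p.coeff i‖ * ‖z‖ ^ i :=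
        (norm_mul_le _ _).trans (mul_le_mul_of_nonneg_left (norm_pow_le z i) (norm_nonneg _))
    _ ≤ ‖p.coeff i‖ * (i.factorial * Real.exp ‖z‖) := by gcongr
    _ = _ := by ring

theorem summable_of_norm_le_of_tendsto {E : Type*} [NormedAddCommGroup E] [CompleteSpace E]
    {u : ℕ → ℂ → E} {c r : ℕ → ℝ} (hc : Summable c) (hr : Tendsto r atTop atTop)
    (hb : ∀ n z, ‖z‖ ≤ r n → ‖u n z‖ ≤ c n) (z : ℂ) : Summable fun n => u n z :=
  .of_norm_bounded_eventually_nat hc <| (hr.eventually_ge_atTop ‖z‖).mono fun n hn => hb n z hn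

theorem differentiable_tsum_of_norm_le_of_tendsto {E : Type*} [NormedAddCommGroup E]
    [NormedSpace ℂ E] [CompleteSpace E] {u : ℕ → ℂ → E} {c r : ℕ → ℝ}
    (hu : ∀ n, Differentiable ℂ (u n)) (hc : Summable c) (hr : Tendsto r atTop atTop)
    (hb : ∀ n z, ‖z‖ ≤ r n → ‖u n z‖ ≤ c n) : Differentiable ℂ fun z => ∑' n, u n z := by
  intro z₀
  have hball : ∀ᶠ n in cofinite, ∀ z ∈ Metric.ball (0 : ℂ) (‖z₀‖ + 1), ‖u n z‖ ≤ c n := by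
    rw [Nat.cofinite_eq_atTop]
    filter_upwards [hr.eventually_ge_atTop (‖z₀‖ + 1)] with n hn z hz
    exact hb n z (((mem_ball_zero_iff.mp hz).le).trans hn)
  have hdiff := (tendstoUniformlyOn_tsum_of_cofinite_eventually hc hball).tendstoLocallyUniformlyOn
    |>.differentiableOn (.of_forall fun s => DifferentiableOn.fun_sum fun n _ =>
      (hu n).differentiableOn) Metric.isOpen_ball
  exact hdiff.differentiableAt (Metric.isOpen_ball.mem_nhds (by simp))

noncomputable def cutoff (a : ℝ) (m : ℕ) (z : ℂ) : ℂ := 1 - Complex.exp (-(z / a) ^ (2 * m))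

theorem differentiable_cutoff (a : ℝ) (m : ℕ) : Differentiable ℂ (cutoff a m) := by
  unfold cutoff; fun_prop

theorem cutoff_ofReal (a x : ℝ) (m : ℕ) :
    cutoff a m x = ((1 - Real.exp (-(x / a) ^ (2 * m)) : ℝ) : ℂ) := by
  simp [cutoff, Complex.ofReal_exp]

theorem norm_cutoff_ofReal_le_one (a x : ℝ) (m : ℕ) : ‖cutoff a m x‖ ≤ 1 := by
  have hpos := Real.exp_pos (-(x / a) ^ (2 * m))
  have hle : Real.exp (-(x / a) ^ (2 * m)) ≤ 1 :=
    Real.exp_le_one_iff.mpr (neg_nonpos.mpr ((even_two_mul m).pow_nonneg _))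
  rw [cutoff_ofReal, Complex.norm_real, Real.norm_eq_abs, abs_le]
  constructor <;> linarith

theorem norm_cutoff_le {a : ℝ} (ha : 0 < a) (m : ℕ) {z : ℂ} (hz : ‖z‖ ≤ a / 2) :
    ‖cutoff a m z‖ ≤ 2 * (1 / 4) ^ m := by
  have hw : ‖-(z / a) ^ (2 * m)‖ ≤ (1 / 4) ^ m := by
    rw [norm_neg, norm_pow, norm_div, Complex.norm_real, Real.norm_of_nonneg ha.le, pow_mul]
    gcongr
    rw [div_pow, div_le_iff₀ (by positivity)]
    nlinarith [norm_nonneg z]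
  rw [cutoff, ← norm_neg, neg_sub]
  calc ‖Complex.exp (-(z / a) ^ (2 * m)) - 1‖ ≤ 2 * ‖-(z / a) ^ (2 * m)‖ :=
        Complex.norm_exp_sub_one_le (hw.trans (pow_le_one₀ (by norm_num) (by norm_num)))
    _ ≤ 2 * (1 / 4) ^ m := by gcongr

theorem mul_sub_pow_two_mul_le {a q s : ℝ} {m : ℕ} (hq : 1 ≤ q) (hqs : q ≤ s) (hm : 1 ≤ m)
    (ha : a ≤ q ^ m) : a * s - s ^ (2 * m) ≤ a - q ^ m := by
  have hs : s ≤ s ^ m := le_self_pow₀ (hq.trans hqs) (by omega)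
  have hqm : q ^ m ≤ s ^ m := pow_le_pow_left₀ (by linarith) hqs m
  rw [two_mul, pow_add]
  nlinarith

theorem eventually_norm_mul_cutoff_le {h : ℂ → ℂ} {A a δ : ℝ}
    (hh : ∀ z, ‖h z‖ ≤ A * Real.exp ‖z‖) (ha : 0 < a) (hδ : 0 < δ) :
    ∀ᶠ m in atTop, ∀ z, ‖z‖ ≤ a / 2 → ‖h z * cutoff a m z‖ ≤ δ := by
  have hA : 0 ≤ A := nonneg_of_mul_nonneg_left ((norm_nonneg _).trans (hh 0)) (Real.exp_pos _)
  have hlim : Tendsto (fun m : ℕ => A * Real.exp (a / 2) * (2 * (1 / 4) ^ m)) atTop (𝓝 0) := by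
    simpa using ((tendsto_pow_atTop_nhds_zero_of_lt_one (by norm_num : (0 : ℝ) ≤ 1 / 4)
      (by norm_num)).const_mul 2).const_mul (A * Real.exp (a / 2))
  filter_upwards [hlim.eventually (ge_mem_nhds hδ)] with m hm z hz
  calc ‖h z * cutoff a m z‖ ≤ A * Real.exp ‖z‖ * (2 * (1 / 4) ^ m) := by
        rw [norm_mul]; gcongr; exacts [hh z, norm_cutoff_le ha m hz]
    _ ≤ A * Real.exp (a / 2) * (2 * (1 / 4) ^ m) := by gcongr
    _ ≤ δ := hm

theorem eventually_norm_mul_cutoff_sub_le {h : ℂ → ℂ} {A a b θ : ℝ}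
    (hh : ∀ z, ‖h z‖ ≤ A * Real.exp ‖z‖) (ha : 0 < a) (hab : a < b) (hθ : 0 < θ) :
    ∀ᶠ m in atTop, ∀ x : ℝ, b ≤ |x| → ‖h x * cutoff a m x - h x‖ ≤ θ := by
  have hA : 0 ≤ A := nonneg_of_mul_nonneg_left ((norm_nonneg _).trans (hh 0)) (Real.exp_pos _)
  have hq : 1 < b / a := (one_lt_div ha).mpr hab
  have hpow := tendsto_pow_atTop_atTop_of_one_lt hq
  have hlim : Tendsto (fun m : ℕ => A * Real.exp (a - (b / a) ^ m)) atTop (𝓝 0) := by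
    simpa [sub_eq_add_neg] using (Real.tendsto_exp_atBot.comp
      (tendsto_atBot_add_const_left _ a (tendsto_neg_atTop_atBot.comp hpow))).const_mul A
  filter_upwards [hlim.eventually (ge_mem_nhds hθ), hpow.eventually_ge_atTop a,
    eventually_ge_atTop 1] with m hm hqa hm1 x hx
  have hs : b / a ≤ |x| / a := by gcongr
  have heven : (|x| / a) ^ (2 * m) = (x / a) ^ (2 * m) := by
    rw [← abs_of_pos ha, ← abs_div, abs_of_pos ha, (even_two_mul m).pow_abs]
  have hdecay := mul_sub_pow_two_mul_le hq.le hs hm1 hqa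
  rw [mul_div_cancel₀ _ ha.ne', heven] at hdecay
  calc ‖h x * cutoff a m x - h x‖ = ‖h x‖ * Real.exp (-(x / a) ^ (2 * m)) := by
        rw [← mul_sub_one, norm_mul, cutoff_ofReal, ← Complex.ofReal_one, ← Complex.ofReal_sub,
          Complex.norm_real, sub_sub_cancel_left, Real.norm_eq_abs, abs_neg,
          abs_of_pos (Real.exp_pos _)]
    _ ≤ A * Real.exp |x| * Real.exp (-(x / a) ^ (2 * m)) := by
        gcongr; simpa using hh x
    _ ≤ A * Real.exp (a - (b / a) ^ m) := by
        rw [mul_assoc, ← Real.exp_add]; gcongr; linarith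
    _ ≤ θ := hm

theorem Polynomial.exists_norm_mul_cutoff_le (p : ℂ[X]) {a b δ θ : ℝ} (ha : 0 < a) (hab : a < b)
    (hδ : 0 < δ) (hθ : 0 < θ) : ∃ m : ℕ,
      (∀ z, ‖z‖ ≤ a / 2 → ‖p.eval z * cutoff a m z‖ ≤ δ) ∧
      ∀ x : ℝ, b ≤ |x| → ‖p.eval (x : ℂ) * cutoff a m x - p.eval (x : ℂ)‖ ≤ θ := by
  obtain ⟨A, hA⟩ := p.exists_norm_eval_le_mul_exp
  exact ((eventually_norm_mul_cutoff_le hA ha hδ).and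
    (eventually_norm_mul_cutoff_sub_le hA ha hab hθ)).exists

theorem add_tsum_sub_eq_tsum_sub_ite {E : Type*} [AddCommGroup E] [TopologicalSpace E]
    [IsTopologicalAddGroup E] [T2Space E] (s v : ℕ → E) (hv : Summable v) (N : ℕ) :
    s 0 + ∑' n, v n - s N = ∑' n, (v n - if n < N then s (n + 1) - s n else 0) := by
  have hfin : HasSum (fun n => if n < N then s (n + 1) - s n else 0) (s N - s 0) := by
    have h : HasSum (fun n => if n < N then s (n + 1) - s n else 0)
        (∑ n ∈ Finset.range N, if n < N then s (n + 1) - s n else 0) :=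
      hasSum_sum_of_ne_finset_zero fun n hn => if_neg (Finset.mem_range.not.mp hn)
    rwa [Finset.sum_congr rfl fun n hn => if_pos (Finset.mem_range.mp hn),
      Finset.sum_range_sub] at h
  rw [(hv.hasSum.sub hfin).tsum_eq]
  abel

theorem exists_differentiable_norm_sub_lt_one (G : ℝ → ℂ) (hG : Continuous G) :
    ∃ F : ℂ → ℂ, Differentiable ℂ F ∧ ∀ x : ℝ, ‖F x - G x‖ < 1 := by
  choose p hp using fun n : ℕ =>
    exists_polynomial_near_of_continuous G hG (n + 1) ((1 / 2) ^ n / 8) (by positivity)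
  have hstep (n : ℕ) (x : ℝ) (hx : |x| ≤ n + 1) :
      ‖(p (n + 1) - p n).eval (x : ℂ)‖ ≤ (1 / 2) ^ n / 4 := by
    have h₁ := hp (n + 1) x (by push_cast; linarith)
    have h₀ := hp n x hx
    rw [eval_sub, ← sub_sub_sub_cancel_right _ _ (G x)]
    refine (norm_sub_le _ _).trans ?_
    rw [pow_succ] at h₁
    linarith [pow_pos (one_half_pos (α := ℝ)) n]
  choose m hdisc hreal using fun n : ℕ => (p (n + 1) - p n).exists_norm_mul_cutoff_le
    (a := n + 1 / 2) (b := n + 1) (δ := (1 / 2) ^ n) (θ := (1 / 2) ^ n / 8)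
    (by positivity) (by linarith) (by positivity) (by positivity)
  set u : ℕ → ℂ → ℂ := fun n z => (p (n + 1) - p n).eval z * cutoff (n + 1 / 2) (m n) z
  have hr : Tendsto (fun n : ℕ => ((n : ℝ) + 1 / 2) / 2) atTop atTop :=
    (tendsto_atTop_add_const_right _ _ tendsto_natCast_atTop_atTop).atTop_div_const two_pos
  have hc : Summable fun n : ℕ => ((1 : ℝ) / 2) ^ n := hasSum_geometric_two.summable
  refine ⟨fun z => (p 0).eval z + ∑' n, u n z, (p 0).differentiable.add
    (differentiable_tsum_of_norm_le_of_tendsto (fun n => (Polynomial.differentiable _).mul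
      (differentiable_cutoff _ _)) hc hr hdisc), fun x => ?_⟩
  set N := ⌊|x|⌋₊
  have hterm (n : ℕ) : ‖u n x - if n < N then (p (n + 1)).eval (x : ℂ) - (p n).eval (x : ℂ)
      else 0‖ ≤ (1 / 2) ^ n / 4 := by
    split_ifs with hn
    · have hx : (n : ℝ) + 1 ≤ |x| := by exact_mod_cast (Nat.le_floor_iff (abs_nonneg x)).mp hn
      rw [← eval_sub]
      linarith [hreal n x hx, pow_pos (one_half_pos (α := ℝ)) n]
    · have hx : |x| ≤ n + 1 := (Nat.lt_floor_add_one |x|).le.trans (by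
        exact_mod_cast Nat.succ_le_succ (not_lt.mp hn))
      rw [sub_zero, norm_mul]
      exact mul_le_of_le_one_right (norm_nonneg _) (norm_cutoff_ofReal_le_one _ _ _) |>.trans
        (hstep n x hx)
  have htel := add_tsum_sub_eq_tsum_sub_ite (fun n => (p n).eval (x : ℂ)) (fun n => u n x)
    (summable_of_norm_le_of_tendsto hc hr hdisc x) N
  calc ‖(p 0).eval (x : ℂ) + ∑' n, u n x - G x‖
      = ‖((p N).eval (x : ℂ) - G x) + ∑' n, (u n x - if n < N then
          (p (n + 1)).eval (x : ℂ) - (p n).eval (x : ℂ) else 0)‖ := by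
        rw [← htel]; ring_nf
    _ ≤ (1 / 2) ^ N / 8 + 2 / 4 :=
        norm_add_le_of_le (hp N x (Nat.lt_floor_add_one |x|).le).le
          (tsum_of_norm_bounded (hasSum_geometric_two.div_const 4) hterm)
    _ < 1 := by linarith [pow_le_one₀ (n := N) (by norm_num : (0 : ℝ) ≤ 1 / 2) (by norm_num)]

theorem exists_differentiable_lt_re (ψ : ℝ → ℝ) (hψ : Continuous ψ) :
    ∃ F : ℂ → ℂ, Differentiable ℂ F ∧ ∀ x : ℝ, ψ x < (F x).re := by
  obtain ⟨F, hF, hnear⟩ := exists_differentiable_norm_sub_lt_one (fun x => ((ψ x + 1 : ℝ) : ℂ))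
    (Complex.continuous_ofReal.comp (hψ.add continuous_const))
  refine ⟨F, hF, fun x => ?_⟩
  have h := (Complex.abs_re_le_norm _).trans_lt (hnear x)
  rw [Complex.sub_re, Complex.ofReal_re] at h
  linarith [(abs_lt.mp h).1]

theorem carleman_approximation (g : ℝ → ℂ) (hg : Continuous g)
    (ε : ℝ → ℝ) (hε : Continuous ε) (hεp : ∀ x, 0 < ε x) :
    ∃ f : ℂ → ℂ, Differentiable ℂ f ∧ ∀ x : ℝ, ‖f x - g x‖ < ε x := by
  obtain ⟨F₁, hF₁, hre⟩ :=
    exists_differentiable_lt_re (fun x => -Real.log (ε x)) (hε.log fun x => (hεp x).ne').neg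
  obtain ⟨F₂, hF₂, hnear⟩ := exists_differentiable_norm_sub_lt_one
    (fun x => g x * Complex.exp (F₁ x))
    (hg.mul (hF₁.continuous.comp Complex.continuous_ofReal).cexp)
  refine ⟨fun z => F₂ z * Complex.exp (-F₁ z), hF₂.mul hF₁.neg.cexp, fun x => ?_⟩
  calc ‖F₂ x * Complex.exp (-F₁ x) - g x‖
      = ‖F₂ x - g x * Complex.exp (F₁ x)‖ * Real.exp (-(F₁ x).re) := by
        rw [← Complex.neg_re, ← Complex.norm_exp, ← norm_mul, sub_mul, mul_assoc,
          ← Complex.exp_add, add_neg_cancel, Complex.exp_zero, mul_one]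
    _ < Real.exp (Real.log (ε x)) :=
        (mul_lt_of_lt_one_left (Real.exp_pos _) (hnear x)).trans
          (Real.exp_lt_exp.mpr (by linarith [hre x]))
    _ = ε x := Real.exp_log (hεp x)
end
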